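/- Let N, p be positive integers with p ≤ N, let Ψ be a real N×p matrix of full column rank, let R be a real symmetric positive definite N×N matrix, and let y ∈ ℝ^N. Define π̂_WLS = (ΨᵀR⁻¹Ψ)⁻¹ΨᵀR⁻¹y. Then lim_{g→∞} (g·ΨΨᵀ + R)⁻¹ y = R⁻¹(y − Ψπ̂_WLS). -/

import Mathlib

/-!
Write `g • ΨΨᵀ + R = R + Ψ (g • 1) Ψᵀ`. By the Woodbury identity its inverse is
`R⁻¹ - R⁻¹ Ψ (g⁻¹ • 1 + ΨᵀR⁻¹Ψ)⁻¹ ΨᵀR⁻¹`, in which `g` enters only through `g⁻¹ → 0`.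
Since `Ψ` has full column rank, `ΨᵀR⁻¹Ψ` is positive definite, hence invertible, so matrix
inversion is continuous there, and applying the limit `R⁻¹ - R⁻¹ Ψ (ΨᵀR⁻¹Ψ)⁻¹ ΨᵀR⁻¹` to `y`
gives `R⁻¹ (y - Ψ π̂_WLS)`.
-/

open Matrix Filter Topology

namespace Matrix

theorem mulVec_injective_of_rank_eq_card {m n K : Type*} [Fintype n] [Field K] {A : Matrix m n K}
    (hA : A.rank = Fintype.card n) : Function.Injective A.mulVec := by
  have hrank_nullity := A.mulVecLin.finrank_range_add_finrank_ker
  rw [← Matrix.rank, hA, Module.finrank_fintype_fun_eq_card] at hrank_nullity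
  have hker : LinearMap.ker A.mulVecLin = ⊥ := Submodule.finrank_eq_zero.mp (by omega)
  exact LinearMap.ker_eq_bot.mp hker

variable {m n : Type*} [Fintype m] [DecidableEq m] [Fintype n] [DecidableEq n]

theorem inv_add_smul_mul_eq_sub {K : Type*} [Field K] {R : Matrix m m K} {U : Matrix m n K}
    {V : Matrix n m K} {g : K} (hg : g ≠ 0) (hR : IsUnit R)
    (hM : IsUnit (g⁻¹ • (1 : Matrix n n K) + V * R⁻¹ * U)) :
    (R + g • (U * V))⁻¹ = R⁻¹ - R⁻¹ * U * (g⁻¹ • 1 + V * R⁻¹ * U)⁻¹ * V * R⁻¹ := by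
  have hscalar_inv : (g • (1 : Matrix n n K))⁻¹ = g⁻¹ • 1 :=
    inv_eq_right_inv (by simp [smul_smul, hg])
  have hscalar_unit : IsUnit (g • (1 : Matrix n n K)) := by
    simpa using (isUnit_one (M := Matrix n n K)).smul (Units.mk0 g hg)
  rw [← hscalar_inv] at hM ⊢
  rw [← add_mul_mul_inv_eq_sub R U _ V hR hscalar_unit hM, Matrix.mul_smul, Matrix.mul_one,
    Matrix.smul_mul]

theorem tendsto_inv_add_smul_mul_atTop {R : Matrix m m ℝ} {U : Matrix m n ℝ} {V : Matrix n m ℝ}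
    (hR : IsUnit R) (hM : IsUnit (V * R⁻¹ * U)) :
    Tendsto (fun g : ℝ => (R + g • (U * V))⁻¹) atTop
      (𝓝 (R⁻¹ - R⁻¹ * U * (V * R⁻¹ * U)⁻¹ * V * R⁻¹)) := by
  set M := V * R⁻¹ * U
  have hlim : Tendsto (fun g : ℝ => g⁻¹ • (1 : Matrix n n ℝ) + M) atTop (𝓝 M) := by
    simpa using ((tendsto_inv_atTop_zero (𝕜 := ℝ)).smul_const (1 : Matrix n n ℝ)).add_const M
  have hdet_ne : M.det ≠ 0 := ((isUnit_iff_isUnit_det M).mp hM).ne_zero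
  have hunit : ∀ᶠ g : ℝ in atTop, IsUnit (g⁻¹ • (1 : Matrix n n ℝ) + M) := by
    filter_upwards [((continuous_id.matrix_det.tendsto M).comp hlim).eventually_ne hdet_ne]
      with g hg
    exact (isUnit_iff_isUnit_det _).mpr (isUnit_iff_ne_zero.mpr hg)
  have hinv_cont : ContinuousAt Inv.inv M := by
    refine continuousAt_matrix_inv M ?_
    rw [Ring.inverse_eq_inv']
    exact continuousAt_inv₀ hdet_ne
  have hwoodbury_cont : ContinuousAt (fun X => R⁻¹ - R⁻¹ * U * X⁻¹ * V * R⁻¹) M := by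
    fun_prop
  refine (hwoodbury_cont.tendsto.comp hlim).congr' ?_
  filter_upwards [hunit, eventually_ne_atTop 0] with g hunit_g hg
  exact (inv_add_smul_mul_eq_sub hg hR hunit_g).symm

end Matrix

theorem posterior_weight_tendsto_general
    (N p : ℕ)
    (Ψ : Matrix (Fin N) (Fin p) ℝ) (hΨ : Ψ.rank = p)
    (R : Matrix (Fin N) (Fin N) ℝ) (hR : R.PosDef)
    (y : Fin N → ℝ)
    (πWLS : Fin p → ℝ)
    (hπWLS : πWLS = ((Ψᵀ * R⁻¹ * Ψ)⁻¹ * (Ψᵀ * R⁻¹)).mulVec y) :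
    Tendsto (fun g : ℝ => ((g • (Ψ * Ψᵀ) + R)⁻¹).mulVec y) atTop
      (𝓝 ((R⁻¹).mulVec (y - Ψ.mulVec πWLS))) := by
  have hΨinj : Function.Injective Ψ.mulVec :=
    mulVec_injective_of_rank_eq_card (by rw [hΨ, Fintype.card_fin])
  have hM : (Ψᵀ * R⁻¹ * Ψ).PosDef := by
    simpa using hR.inv.conjTranspose_mul_mul_same hΨinj
  have hlim : Tendsto (fun g : ℝ => (R + g • (Ψ * Ψᵀ))⁻¹ *ᵥ y) atTop
      (𝓝 ((R⁻¹ - R⁻¹ * Ψ * (Ψᵀ * R⁻¹ * Ψ)⁻¹ * Ψᵀ * R⁻¹) *ᵥ y)) :=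
    ((continuous_id.matrix_mulVec continuous_const).tendsto _).comp
      (tendsto_inv_add_smul_mul_atTop hR.isUnit hM.isUnit)
  convert hlim using 2 with g
  · simp [add_comm]
  · rw [hπWLS, Matrix.mulVec_sub, Matrix.sub_mulVec]
    simp [Matrix.mulVec_mulVec, Matrix.mul_assoc]

/-- Proposition 1(i), nonparametric component: as the prior variance `g = γ² → ∞`,
`(gΨΨᵀ + R)⁻¹ y` converges to `R⁻¹(y − Ψπ̂_WLS)`. -/
theorem posterior_weight_tendsto
    (N p : ℕ) (hN : 0 < N) (hp : 0 < p) (hpN : p ≤ N)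
    (Ψ : Matrix (Fin N) (Fin p) ℝ) (hΨ : Ψ.rank = p)
    (R : Matrix (Fin N) (Fin N) ℝ) (hR : R.PosDef)
    (y : Fin N → ℝ)
    (πWLS : Fin p → ℝ)
    (hπWLS : πWLS = ((Ψᵀ * R⁻¹ * Ψ)⁻¹ * (Ψᵀ * R⁻¹)).mulVec y) :
    Tendsto (fun g : ℝ => ((g • (Ψ * Ψᵀ) + R)⁻¹).mulVec y) atTop
      (𝓝 ((R⁻¹).mulVec (y - Ψ.mulVec πWLS))) :=
  posterior_weight_tendsto_general N p Ψ hΨ R hR y πWLS hπWLS
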